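/- arXiv:1711.07382 — 3 statements merged into one kernel-verified Lean document; each statement's English description precedes it below -/
import Mathlib

section
/- For all real θ with sin θ ≠ 0 and real numbers a, b, α, β satisfying a = |α−β|/2 and b = |α+β|/2, setting r± = −αβ ± √((1−α²)(1−β²)) (with |α| ≤ 1, |β| ≤ 1), one has (a·tan(θ/2) − b·cot(θ/2))² = 1 − (a+b)² + (cos θ − r₊)(cos θ − r₋)/sin² θ. -/
/-!
Write `s = sin (θ/2)`, `c = cos (θ/2)`, so that `sin θ = 2sc` and `cos θ = c² - s²`.
Since `r₊, r₋ = -αβ ± √Δ` with `Δ = (1-α²)(1-β²) ≥ 0`, the numerator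
`(cos θ - r₊)(cos θ - r₋)` equals `(cos θ + αβ)² - Δ`. Only `a² = (α-β)²/4` and
`b² = (α+β)²/4` enter: the cross term `-2ab` occurs on both sides. After clearing
the denominator `4s²c²` the claim is a polynomial identity modulo `s² + c² = 1`.
-/

open Real

lemma sub_neg_add_sqrt_mul_sub_neg_sub_sqrt {D : ℝ} (x p : ℝ) (hD : 0 ≤ D) :
    (x - (-p + √D)) * (x - (-p - √D)) = (x + p) ^ 2 - D := by
  linear_combination (-1 : ℝ) * Real.sq_sqrt hD

lemma sq_mul_div_sub_mul_div_eq_of_sq_add_sq {s c a b α β : ℝ} (hs : s ≠ 0) (hc : c ≠ 0)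
    (hsc : s ^ 2 + c ^ 2 = 1) (ha : a ^ 2 = (α - β) ^ 2 / 4) (hb : b ^ 2 = (α + β) ^ 2 / 4) :
    (a * (s / c) - b * (c / s)) ^ 2
      = 1 - (a + b) ^ 2 + ((c ^ 2 - s ^ 2 + α * β) ^ 2 - (1 - α ^ 2) * (1 - β ^ 2))
          / (2 * s * c) ^ 2 := by
  field_simp
  -- with `4a² = (α-β)²`, `4b² = (α+β)²` substituted, the difference of the two sides is
  -- `(s² + c² - 1)((α² + β² - 1)(s² + c² + 1) + 2αβ(c² - s²))`
  linear_combination 4 * s ^ 2 * (s ^ 2 + c ^ 2) * ha + 4 * c ^ 2 * (s ^ 2 + c ^ 2) * hb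
    + ((α ^ 2 + β ^ 2 - 1) * (s ^ 2 + c ^ 2 + 1) + 2 * α * β * (c ^ 2 - s ^ 2)) * hsc

theorem stmt0 (θ a b α β rp rm : ℝ) (hθ : Real.sin θ ≠ 0)
    (hα : |α| ≤ 1) (hβ : |β| ≤ 1)
    (ha : a = |α - β| / 2) (hb : b = |α + β| / 2)
    (hrp : rp = -(α * β) + Real.sqrt ((1 - α ^ 2) * (1 - β ^ 2)))
    (hrm : rm = -(α * β) - Real.sqrt ((1 - α ^ 2) * (1 - β ^ 2))) :
    (a * Real.tan (θ / 2) - b * (Real.cos (θ / 2) / Real.sin (θ / 2))) ^ 2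
      = 1 - (a + b) ^ 2 + (Real.cos θ - rp) * (Real.cos θ - rm) / Real.sin θ ^ 2 := by
  have hΔ : 0 ≤ (1 - α ^ 2) * (1 - β ^ 2) :=
    mul_nonneg (sub_nonneg.2 (sq_le_one_iff_abs_le_one α |>.2 hα))
      (sub_nonneg.2 (sq_le_one_iff_abs_le_one β |>.2 hβ))
  have hθ2 : θ = 2 * (θ / 2) := by ring
  have hsin : Real.sin θ = 2 * Real.sin (θ / 2) * Real.cos (θ / 2) := by
    rw [hθ2, sin_two_mul, ← hθ2]
  have hcos : Real.cos θ = Real.cos (θ / 2) ^ 2 - Real.sin (θ / 2) ^ 2 := by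
    rw [hθ2, cos_two_mul', ← hθ2]
  have hs : Real.sin (θ / 2) ≠ 0 := fun h ↦ hθ (by rw [hsin, h]; ring)
  have hc : Real.cos (θ / 2) ≠ 0 := fun h ↦ hθ (by rw [hsin, h]; ring)
  rw [tan_eq_sin_div_cos, hrp, hrm, sub_neg_add_sqrt_mul_sub_neg_sub_sqrt _ _ hΔ, hcos, hsin]
  refine sq_mul_div_sub_mul_div_eq_of_sq_add_sq hs hc (sin_sq_add_cos_sq _) ?_ ?_
  · rw [ha, div_pow, sq_abs]; norm_num
  · rw [hb, div_pow, sq_abs]; norm_num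
end

section
/- Let μ = (δ₁ + δ₋₁)/2 on the unit circle and let μ ⨯ μ denote the multiplicative boolean convolution, characterized by F_{μ⨯μ}(z) = F_μ(z)², where F_ν(z) = χ_ν(z)/z and χ_ν = ψ_ν/(1+ψ_ν). Then ψ_{μ⨯μ}(z) = z³/(1−z³) and the Herglotz transform satisfies H_{μ⨯μ}(z) = (1+z³)/(1−z³) on the open unit disc. -/
open MeasureTheory Metric
open scoped ENNReal

/-- The moment generating function `ψ_ν`. -/
noncomputable def psi (ν : Measure ℂ) (z : ℂ) : ℂ := ∫ ζ, z / (ζ - z) ∂ν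

/-- The `F`-transform `F_ν(z) = χ_ν(z)/z` where `χ_ν = ψ_ν/(1+ψ_ν)`. -/
noncomputable def Ftrans (ν : Measure ℂ) (z : ℂ) : ℂ :=
  (psi ν z / (1 + psi ν z)) / z

/-! The hypothesis `F_ν(z) = F_μ(z)² = z²` says `χ_ν(z) = z³`; inverting `χ = ψ/(1+ψ)` gives
`ψ_ν(z) = z³/(1 - z³)`, and then `H_ν = 1 + 2ψ_ν = (1 + z³)/(1 - z³)`. -/

@[simp]
lemma psi_zero (ν : Measure ℂ) : psi ν 0 = 0 := by
  simp [psi]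

lemma psi_smul_dirac_add_smul_dirac {c d : ℝ≥0∞} (hc : c ≠ ∞) (hd : d ≠ ∞) (a b z : ℂ) :
    psi (c • Measure.dirac a + d • Measure.dirac b) z
      = c.toReal * (z / (a - z)) + d.toReal * (z / (b - z)) := by
  have hint : ∀ (e : ℝ≥0∞) (x : ℂ), e ≠ ∞ →
      Integrable (fun ζ : ℂ => z / (ζ - z)) (e • Measure.dirac x) := fun e x he =>
    (integrable_dirac enorm_lt_top).smul_measure he
  rw [psi, integral_add_measure (hint c a hc) (hint d b hd), integral_smul_measure,
    integral_smul_measure, integral_dirac, integral_dirac, Complex.real_smul, Complex.real_smul]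

lemma Ftrans_symmetric_bernoulli {z : ℂ} (hz : z ≠ 0) (hz2 : z ^ 2 ≠ 1) :
    Ftrans ((1 / 2 : ℝ≥0∞) • Measure.dirac 1 + (1 / 2 : ℝ≥0∞) • Measure.dirac (-1)) z = z := by
  have hsub : 1 - z ≠ 0 := fun h => hz2 (by linear_combination (-1 - z) * h)
  have hadd : -1 - z ≠ 0 := fun h => hz2 (by linear_combination (1 - z) * h)
  rw [Ftrans, psi_smul_dirac_add_smul_dirac (by simp) (by simp)]
  have : ((1 / 2 : ℝ≥0∞).toReal : ℂ) = 1 / 2 := by norm_num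
  rw [this]
  field_simp
  ring

lemma eq_div_one_sub_of_div_one_add_eq {p w : ℂ} (hw₀ : w ≠ 0) (hw₁ : w ≠ 1)
    (h : p / (1 + p) = w) : p = w / (1 - w) := by
  have hp : 1 + p ≠ 0 := fun hp => hw₀ (by rw [← h, hp, div_zero])
  rw [div_eq_iff hp] at h
  rw [eq_div_iff (sub_ne_zero.2 hw₁.symm)]
  linear_combination h

lemma pow_ne_one_of_norm_lt_one {z : ℂ} (hz : ‖z‖ < 1) {n : ℕ} (hn : n ≠ 0) : z ^ n ≠ 1 := by
  intro h
  have := congrArg norm h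
  rw [norm_pow, norm_one] at this
  exact (pow_lt_one₀ (norm_nonneg z) hz hn).ne this

theorem stmt9_general (μ ν : Measure ℂ)
    (hμ : μ = (1 / 2 : ℝ≥0∞) • Measure.dirac (1 : ℂ)
            + (1 / 2 : ℝ≥0∞) • Measure.dirac (-1 : ℂ))
    (hbool : ∀ z ∈ ball (0 : ℂ) 1, z ≠ 0 → Ftrans ν z = (Ftrans μ z) ^ 2) :
    ∀ z ∈ ball (0 : ℂ) 1,
      psi ν z = z ^ 3 / (1 - z ^ 3) ∧
      1 + 2 * psi ν z = (1 + z ^ 3) / (1 - z ^ 3) := by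
  intro z hz
  have hnorm : ‖z‖ < 1 := mem_ball_zero_iff.1 hz
  have hz3 : z ^ 3 ≠ 1 := pow_ne_one_of_norm_lt_one hnorm three_ne_zero
  have hpsi : psi ν z = z ^ 3 / (1 - z ^ 3) := by
    rcases eq_or_ne z 0 with rfl | hz0
    · simp
    have hF := hbool z hz hz0
    rw [hμ, Ftrans_symmetric_bernoulli hz0 (pow_ne_one_of_norm_lt_one hnorm two_ne_zero),
      Ftrans, div_eq_iff hz0] at hF
    exact eq_div_one_sub_of_div_one_add_eq (pow_ne_zero 3 hz0) hz3 (hF.trans (by ring))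
  refine ⟨hpsi, ?_⟩
  rw [hpsi]
  field_simp [sub_ne_zero.2 hz3.symm]
  ring

theorem stmt9 (μ ν : Measure ℂ) [IsProbabilityMeasure ν]
    (hν : ∀ᵐ ζ ∂ν, ‖ζ‖ = 1)
    (hμ : μ = (1 / 2 : ℝ≥0∞) • Measure.dirac (1 : ℂ)
            + (1 / 2 : ℝ≥0∞) • Measure.dirac (-1 : ℂ))
    (hbool : ∀ z ∈ ball (0 : ℂ) 1, z ≠ 0 → Ftrans ν z = (Ftrans μ z) ^ 2) :
    ∀ z ∈ ball (0 : ℂ) 1,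
      psi ν z = z ^ 3 / (1 - z ^ 3) ∧
      1 + 2 * psi ν z = (1 + z ^ 3) / (1 - z ^ 3) :=
  stmt9_general μ ν hμ hbool
end

section
/- Let H(t,z) be defined as the Herglotz transform of λ_{2t}, with moment formula H(t,z) = 1 + 2Σ_{k≥1} m_k(2t) z^k, where m_k(t) = e^{−kt/2} Σ_{j=0}^{k−1} ((−t)^j/j!) C(k,j+1) k^{j−1}. Then H(t,z) is a formal power series solution of the PDE ∂_t H + z H ∂_z H = 0 with H(0,z) = (1+z)/(1−z). -/
open Finset

/-- The `k`-th moment of the spectral distribution of the free unitary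
Brownian motion at time `t`. -/
noncomputable def fubMoment (k : ℕ) (t : ℝ) : ℝ :=
  Real.exp (-(k : ℝ) * t / 2) *
    ∑ j ∈ Finset.range k,
      ((-t) ^ j / (Nat.factorial j : ℝ)) * (Nat.choose k (j + 1) : ℝ)
        * (k : ℝ) ^ ((j : ℤ) - 1)

/-- The `n`-th Taylor coefficient (in `z`) of the Herglotz transform
`H(t,z) = 1 + 2 ∑_{k ≥ 1} m_k(2t) z^k` of `λ_{2t}`. -/
noncomputable def herglotzCoeff (n : ℕ) (t : ℝ) : ℝ :=
  if n = 0 then 1 else 2 * fubMoment n (2 * t)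

namespace Stmt13

open PowerSeries

noncomputable section

variable (t : ℝ)

/-- coefficient sequence of `u^2` -/
def cv2 (f : ℕ → ℝ) (n : ℕ) : ℝ := ∑ p ∈ Finset.HasAntidiagonal.antidiagonal n, f p.1 * f p.2
/-- coefficient sequence of `u^3` -/
def cv3 (f : ℕ → ℝ) (n : ℕ) : ℝ := ∑ p ∈ Finset.HasAntidiagonal.antidiagonal n, f p.1 * cv2 f p.2

def step (t : ℝ) (n : ℕ) (f : ℕ → ℝ) : ℝ :=
  if n = 0 then 0 else if n = 1 then 1 else
    ((n : ℝ) - 1)⁻¹ *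
      (cv2 f n - t * (((n : ℝ)/2) * cv2 f n + ((n : ℝ)/3) * cv3 f n))

def hist (t : ℝ) : ℕ → (ℕ → ℝ)
  | 0 => fun _ => 0
  | n+1 => fun k => if k = n then step t n (hist t n) else hist t n k

def uc (t : ℝ) (n : ℕ) : ℝ := step t n (hist t n)

lemma hist_lt (t : ℝ) : ∀ n k, k < n → hist t n k = uc t k := by
  intro n
  induction n with
  | zero => intro k hk; omega
  | succ n ih =>
    intro k hk
    by_cases h : k = n
    · subst h; simp [hist, uc]
    · have : k < n := by omega
      simp [hist, h, ih k this]

@[simp] lemma uc_zero (t : ℝ) : uc t 0 = 0 := by simp [uc, step]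
@[simp] lemma uc_one (t : ℝ) : uc t 1 = 1 := by simp [uc, step]

lemma cv2_congr {f g : ℕ → ℝ} (n : ℕ) (h : ∀ k < n, f k = g k)
    (hf : f 0 = 0) (hg : g 0 = 0) : cv2 f n = cv2 g n := by
  unfold cv2
  refine Finset.sum_congr rfl ?_
  rintro ⟨a, b⟩ hp
  rw [Finset.HasAntidiagonal.mem_antidiagonal] at hp
  rcases Nat.eq_zero_or_pos a with ha | ha
  · subst ha; simp [hf, hg]
  rcases Nat.eq_zero_or_pos b with hb | hb
  · subst hb; simp [hf, hg]
  have : a < n := by omega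
  have : b < n := by omega
  simp only [h a ‹a < n›, h b ‹b < n›]

lemma cv3_congr {f g : ℕ → ℝ} (n : ℕ) (h : ∀ k < n, f k = g k)
    (hf : f 0 = 0) (hg : g 0 = 0) : cv3 f n = cv3 g n := by
  unfold cv3
  refine Finset.sum_congr rfl ?_
  rintro ⟨a, b⟩ hp
  rw [Finset.HasAntidiagonal.mem_antidiagonal] at hp
  simp only at hp ⊢
  rcases Nat.eq_zero_or_pos a with ha | ha
  · subst ha; simp [hf, hg]
  rcases Nat.eq_zero_or_pos b with hb | hb
  · subst hb
    have h1 : cv2 f 0 = 0 := by simp [cv2, hf]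
    have h2 : cv2 g 0 = 0 := by simp [cv2, hg]
    rw [h1, h2]; ring
  have ha' : a < n := by omega
  have hb' : b < n := by omega
  rw [h a ha', cv2_congr b (fun k hk => h k (by omega)) hf hg]

lemma uc_rec (t : ℝ) (n : ℕ) (h2 : 2 ≤ n) :
    ((n : ℝ) - 1) * uc t n =
      cv2 (uc t) n - t * (((n : ℝ)/2) * cv2 (uc t) n + ((n : ℝ)/3) * cv3 (uc t) n) := by
  have h0 : (hist t n) 0 = 0 := by
    rw [hist_lt t n 0 (by omega)]; simp
  have hcv2 : cv2 (hist t n) n = cv2 (uc t) n :=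
    cv2_congr n (fun k hk => hist_lt t n k hk) h0 (by simp)
  have hcv3 : cv3 (hist t n) n = cv3 (uc t) n :=
    cv3_congr n (fun k hk => hist_lt t n k hk) h0 (by simp)
  have hn0 : n ≠ 0 := by omega
  have hn1 : n ≠ 1 := by omega
  have hne : ((n : ℝ) - 1) ≠ 0 := by
    have : (2 : ℝ) ≤ (n : ℝ) := by exact_mod_cast h2
    linarith
  rw [uc, step, if_neg hn0, if_neg hn1, hcv2, hcv3]
  field_simp

lemma coeff_pow_eq_zero {v : ℝ⟦X⟧} (hv : constantCoeff v = 0) :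
    ∀ (j N : ℕ), N < j → (coeff N) (v ^ j) = 0 := by
  intro j
  induction j with
  | zero => intro N h; omega
  | succ j ih =>
    intro N h
    rw [pow_succ, coeff_mul]
    refine Finset.sum_eq_zero ?_
    rintro ⟨a, b⟩ hp
    rw [Finset.HasAntidiagonal.mem_antidiagonal] at hp
    simp only
    rcases Nat.lt_or_ge a j with ha | ha
    · rw [ih a ha, zero_mul]
    · have hb : b = 0 := by omega
      subst hb
      rw [coeff_zero_eq_constantCoeff, hv, mul_zero]

/-- substitution of `v` (zero constant term) into `f` -/
def cps (f v : ℝ⟦X⟧) : ℝ⟦X⟧ :=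
  PowerSeries.mk fun N => ∑ j ∈ range (N+1), coeff j f * coeff N (v ^ j)

lemma coeff_cps (f v : ℝ⟦X⟧) (N : ℕ) :
    coeff N (cps f v) = ∑ j ∈ range (N+1), coeff j f * coeff N (v ^ j) :=
  coeff_mk N _

lemma coeff_cps' {v : ℝ⟦X⟧} (hv : constantCoeff v = 0) (f : ℝ⟦X⟧) {N M : ℕ}
    (h : N < M) :
    coeff N (cps f v) = ∑ j ∈ range M, coeff j f * coeff N (v ^ j) := by
  rw [coeff_cps]
  refine Finset.sum_subset ?_ ?_
  · intro x hx; rw [Finset.mem_range] at *; omega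
  · intro x _ hx
    rw [Finset.mem_range] at hx
    rw [coeff_pow_eq_zero hv x N (by omega), mul_zero]

lemma cps_one {v : ℝ⟦X⟧} : cps 1 v = 1 := by
  ext N
  rw [coeff_cps]
  rcases Nat.eq_zero_or_pos N with h | h
  · subst h; simp
  · rw [Finset.sum_eq_single 0]
    · simp [coeff_one, Nat.pos_iff_ne_zero.mp h]
    · intro j _ hj
      rw [coeff_one, if_neg hj, zero_mul]
    · intro h'; simp at h'

lemma cps_X {v : ℝ⟦X⟧} (hv : constantCoeff v = 0) : cps X v = v := by
  ext N
  rw [coeff_cps]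
  rcases Nat.eq_zero_or_pos N with h | h
  · subst h; simp [coeff_X, ← coeff_zero_eq_constantCoeff] at *
    simp [hv]
  · rw [Finset.sum_eq_single 1]
    · simp
    · intro j _ hj
      rw [coeff_X, if_neg hj, zero_mul]
    · intro h'; rw [Finset.mem_range] at h'; omega

lemma cps_add (f g v : ℝ⟦X⟧) : cps (f + g) v = cps f v + cps g v := by
  ext N
  rw [map_add, coeff_cps, coeff_cps, coeff_cps, ← Finset.sum_add_distrib]
  refine Finset.sum_congr rfl fun j _ => by rw [map_add, add_mul]

lemma cps_mul {v : ℝ⟦X⟧} (hv : constantCoeff v = 0) (f g : ℝ⟦X⟧) :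
    cps (f * g) v = cps f v * cps g v := by
  ext N
  have key : ∀ (a b : ℕ), a + b > N → coeff N (v ^ (a+b)) = 0 :=
    fun a b h => coeff_pow_eq_zero hv _ N h
  -- RHS
  rw [coeff_mul]
  have hR : ∑ p ∈ Finset.HasAntidiagonal.antidiagonal N, coeff p.1 (cps f v) * coeff p.2 (cps g v)
      = ∑ p ∈ Finset.HasAntidiagonal.antidiagonal N, ∑ a ∈ range (N+1), ∑ b ∈ range (N+1),
          (coeff a f * coeff b g) * (coeff p.1 (v^a) * coeff p.2 (v^b)) := by
    refine Finset.sum_congr rfl ?_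
    rintro ⟨c, d⟩ hp
    rw [Finset.HasAntidiagonal.mem_antidiagonal] at hp
    simp only
    rw [coeff_cps' hv f (show c < N+1 by omega), coeff_cps' hv g (show d < N+1 by omega),
      Finset.sum_mul_sum]
    refine Finset.sum_congr rfl fun a _ => Finset.sum_congr rfl fun b _ => by ring
  rw [hR, Finset.sum_comm]
  have hR2 : ∀ a ∈ range (N+1),
      (∑ p ∈ Finset.HasAntidiagonal.antidiagonal N, ∑ b ∈ range (N+1),
        (coeff a f * coeff b g) * (coeff p.1 (v^a) * coeff p.2 (v^b)))
      = ∑ b ∈ range (N+1), (coeff a f * coeff b g) * coeff N (v ^ (a+b)) := by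
    intro a _
    rw [Finset.sum_comm]
    refine Finset.sum_congr rfl fun b _ => ?_
    rw [pow_add, coeff_mul, Finset.mul_sum]
  rw [Finset.sum_congr rfl hR2]
  -- LHS
  rw [coeff_cps]
  have hL : ∀ j ∈ range (N+1),
      coeff j (f*g) * coeff N (v^j)
        = ∑ p ∈ Finset.HasAntidiagonal.antidiagonal j, (coeff p.1 f * coeff p.2 g) * coeff N (v^(p.1+p.2)) := by
    intro j _
    rw [coeff_mul, Finset.sum_mul]
    refine Finset.sum_congr rfl ?_
    rintro ⟨a,b⟩ hp
    rw [Finset.HasAntidiagonal.mem_antidiagonal] at hp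
    simp only [hp]
  rw [Finset.sum_congr rfl hL]
  -- now both sides are sums of F a b := coeff a f * coeff b g * coeff N v^{a+b}
  rw [Finset.sum_sigma']
  have step1 :
      (∑ p ∈ (Finset.range (N+1)).sigma (fun j => Finset.HasAntidiagonal.antidiagonal j),
        (coeff p.2.1 f * coeff p.2.2 g) * coeff N (v ^ (p.2.1 + p.2.2)))
      = ∑ p ∈ (Finset.range (N+1) ×ˢ Finset.range (N+1)).filter (fun p => p.1 + p.2 ≤ N),
          (coeff p.1 f * coeff p.2 g) * coeff N (v ^ (p.1 + p.2)) := by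
    refine Finset.sum_nbij' (fun p => (p.2.1, p.2.2)) (fun p => ⟨p.1 + p.2, (p.1, p.2)⟩) ?_ ?_ ?_ ?_ ?_
    · rintro ⟨j, a, b⟩ hp
      simp only [Finset.mem_sigma, Finset.mem_range, Finset.HasAntidiagonal.mem_antidiagonal] at hp
      simp only [Finset.mem_filter, Finset.mem_product, Finset.mem_range]
      refine ⟨⟨by omega, by omega⟩, by omega⟩
    · rintro ⟨a, b⟩ hp
      simp only [Finset.mem_filter, Finset.mem_product, Finset.mem_range] at hp
      simp only [Finset.mem_sigma, Finset.mem_range, Finset.HasAntidiagonal.mem_antidiagonal]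
      exact ⟨by omega, trivial⟩
    · rintro ⟨j, a, b⟩ hp
      simp only [Finset.mem_sigma, Finset.mem_range, Finset.HasAntidiagonal.mem_antidiagonal] at hp
      simp [hp.2]
    · rintro ⟨a, b⟩ _; rfl
    · rintro ⟨j, a, b⟩ _; rfl
  have step2 :
      (∑ p ∈ (Finset.range (N+1) ×ˢ Finset.range (N+1)).filter (fun p => p.1 + p.2 ≤ N),
          (coeff p.1 f * coeff p.2 g) * coeff N (v ^ (p.1 + p.2)))
      = ∑ p ∈ (Finset.range (N+1) ×ˢ Finset.range (N+1)),
          (coeff p.1 f * coeff p.2 g) * coeff N (v ^ (p.1 + p.2)) := by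
    refine Finset.sum_subset (Finset.filter_subset _ _) ?_
    rintro ⟨a, b⟩ hp hnp
    simp only [Finset.mem_filter, Finset.mem_product, Finset.mem_range] at hp hnp
    rw [coeff_pow_eq_zero hv (a+b) N (by omega), mul_zero]
  rw [step1, step2, Finset.sum_product]

lemma cps_pow {v : ℝ⟦X⟧} (hv : constantCoeff v = 0) (f : ℝ⟦X⟧) (n : ℕ) :
    cps (f ^ n) v = (cps f v) ^ n := by
  induction n with
  | zero => simpa using cps_one
  | succ n ih => rw [pow_succ, pow_succ, cps_mul hv, ih]

lemma cps_C {v : ℝ⟦X⟧} (a : ℝ) : cps (C a) v = C a := by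
  ext N
  rw [coeff_cps]
  rcases Nat.eq_zero_or_pos N with h | h
  · subst h; simp [coeff_C]
  · rw [Finset.sum_eq_single 0]
    · simp [coeff_C, Nat.pos_iff_ne_zero.mp h, coeff_pow_eq_zero]
    · intro j _ hj; simp [coeff_C, hj]
    · intro h'; simp at h'

/-- helper for coefficient extraction of `cps f v * g` -/
lemma coeff_cps_mul {v : ℝ⟦X⟧} (hv : constantCoeff v = 0) (f g : ℝ⟦X⟧) (N : ℕ) :
    coeff N (cps f v * g) = ∑ j ∈ range (N+1), coeff j f * coeff N (v ^ j * g) := by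
  rw [coeff_mul]
  have h1 : ∀ p ∈ Finset.HasAntidiagonal.antidiagonal N,
      coeff p.1 (cps f v) * coeff p.2 g
        = ∑ j ∈ range (N+1), coeff j f * (coeff p.1 (v ^ j) * coeff p.2 g) := by
    rintro ⟨a, b⟩ hp
    rw [Finset.HasAntidiagonal.mem_antidiagonal] at hp
    simp only
    rw [coeff_cps' hv f (show a < N + 1 by omega), Finset.sum_mul]
    exact Finset.sum_congr rfl fun j _ => by ring
  rw [Finset.sum_congr rfl h1, Finset.sum_comm]
  refine Finset.sum_congr rfl fun j _ => ?_
  rw [coeff_mul, Finset.mul_sum]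

/-- chain rule for cps -/
lemma cps_derivative {v : ℝ⟦X⟧} (hv : constantCoeff v = 0) (f : ℝ⟦X⟧) :
    d⁄dX ℝ (cps f v) = cps (d⁄dX ℝ f) v * d⁄dX ℝ v := by
  ext n
  rw [coeff_derivative, coeff_cps' hv f (show n + 1 < n + 2 by omega), Finset.sum_mul,
    coeff_cps_mul hv]
  have hder : ∀ j : ℕ, coeff (n+1) (v ^ (j+1)) * ((n : ℝ)+1)
      = ((j : ℝ)+1) * coeff n (v ^ j * d⁄dX ℝ v) := by
    intro j
    have hd : d⁄dX ℝ (v ^ (j+1)) = (C ((j:ℝ)+1)) * (v ^ j * d⁄dX ℝ v) := by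
      rw [Derivation.leibniz_pow]
      simp only [Nat.add_sub_cancel, smul_eq_mul, nsmul_eq_mul]
      rw [map_add, map_one, map_natCast]
      push_cast
      ring
    calc coeff (n+1) (v ^ (j+1)) * ((n : ℝ)+1) = coeff n (d⁄dX ℝ (v ^ (j+1))) := by
          rw [coeff_derivative]
    _ = ((j : ℝ)+1) * coeff n (v ^ j * d⁄dX ℝ v) := by
          rw [hd, PowerSeries.coeff_C_mul]
  rw [Finset.sum_range_succ' _ (n+1)]
  have h00 : coeff 0 f * coeff (n+1) ((v : ℝ⟦X⟧) ^ 0) * ((n:ℝ)+1) = 0 := by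
    simp
  rw [h00, add_zero]
  refine Finset.sum_congr rfl fun i _ => ?_
  rw [coeff_derivative]
  calc coeff (i+1) f * coeff (n+1) (v ^ (i+1)) * ((n:ℝ)+1)
      = coeff (i+1) f * (coeff (n+1) (v ^ (i+1)) * ((n:ℝ)+1)) := by ring
    _ = coeff (i+1) f * (((i:ℝ)+1) * coeff n (v ^ i * d⁄dX ℝ v)) := by rw [hder i]
    _ = coeff (i+1) f * ((i:ℝ)+1) * coeff n (v ^ i * d⁄dX ℝ v) := by ring

def U (t : ℝ) : ℝ⟦X⟧ := PowerSeries.mk (uc t)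

@[simp] lemma coeff_U (n : ℕ) : coeff n (U t) = uc t n := coeff_mk n _
@[simp] lemma constantCoeff_U : constantCoeff (U t) = 0 := by
  rw [← coeff_zero_eq_constantCoeff]; simp [uc_zero]

lemma coeff_U2 (n : ℕ) : coeff n (U t ^ 2) = cv2 (uc t) n := by
  rw [pow_two, coeff_mul]; simp [cv2]

lemma coeff_U3 (n : ℕ) : coeff n (U t ^ 3) = cv3 (uc t) n := by
  rw [pow_succ, mul_comm, coeff_mul]
  simp only [coeff_U, coeff_U2, cv3]

lemma ode1 :
    X * d⁄dX ℝ (U t) + C t * (X * (C (1/2) * d⁄dX ℝ (U t ^ 2) + C (1/3) * d⁄dX ℝ (U t ^ 3)))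
      = U t + U t ^ 2 := by
  ext n
  rcases n with _ | n
  · simp [uc_zero, cv2, coeff_U2]
  · rw [map_add, map_add, coeff_succ_X_mul, PowerSeries.coeff_C_mul, coeff_succ_X_mul,
      map_add, PowerSeries.coeff_C_mul, PowerSeries.coeff_C_mul, coeff_derivative,
      coeff_derivative, coeff_derivative, coeff_U, coeff_U2, coeff_U3]
    rcases Nat.lt_or_ge n 1 with h | h
    · interval_cases n
      have h1 : cv2 (uc t) 1 = 0 := by
        simp [cv2, Finset.Nat.antidiagonal_succ, uc_zero]
      have h3 : cv3 (uc t) 1 = 0 := by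
        have h0 : cv2 (uc t) 0 = 0 := by simp [cv2, uc_zero]
        simp [cv3, Finset.Nat.antidiagonal_succ, uc_zero, h0]
      simp [h1, h3, uc_one]
    · have h2 : 2 ≤ n + 1 := by omega
      have := uc_rec t (n+1) h2
      push_cast at this ⊢
      nlinarith [this]
lemma coeff_U_one : coeff 1 (U t) = 1 := by rw [coeff_U]; exact uc_one t

lemma coeff_U2' (n : ℕ) : coeff n (U t ^ 2)
    = ∑ p ∈ Finset.HasAntidiagonal.antidiagonal n, uc t p.1 * uc t p.2 := coeff_U2 t n

def eps (t : ℝ) : ℝ⟦X⟧ := rescale (-t) (exp ℝ)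

lemma coeff_eps (n : ℕ) : coeff n (eps t) = (-t)^n / n.factorial := by
  rw [eps, coeff_rescale, PowerSeries.coeff_exp]
  have : (algebraMap ℚ ℝ) (1 / n.factorial) = 1 / (n.factorial : ℝ) := by
    push_cast; simp
  rw [this]; ring

lemma deriv_eps : d⁄dX ℝ (eps t) = C (-t) * eps t := by
  ext n
  rw [coeff_derivative, PowerSeries.coeff_C_mul, coeff_eps, coeff_eps]
  have h1 : ((n+1).factorial : ℝ) = (n.factorial : ℝ) * ((n:ℝ)+1) := by
    rw [Nat.factorial_succ]; push_cast; ring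
  have h2 : ((n:ℝ)+1) ≠ 0 := by positivity
  have h3 : (n.factorial : ℝ) ≠ 0 := by positivity
  rw [pow_succ, h1]
  field_simp

def Efn (t : ℝ) : ℝ⟦X⟧ := cps (eps t) (U t)
def W (t : ℝ) : ℝ⟦X⟧ := (1 + U t) * Efn t

lemma hE0 : constantCoeff (Efn t) = 1 := by
  rw [← coeff_zero_eq_constantCoeff, Efn, coeff_cps]
  simp [coeff_eps]

lemma hW0 : constantCoeff (W t) = 1 := by
  rw [W, map_mul, map_add, map_one, constantCoeff_U, hE0]; ring

lemma hE' : d⁄dX ℝ (Efn t) = -(C t) * Efn t * d⁄dX ℝ (U t) := by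
  rw [Efn, cps_derivative (constantCoeff_U t), deriv_eps,
    cps_mul (constantCoeff_U t), cps_C, map_neg]

lemma hmul (f g : ℝ⟦X⟧) : d⁄dX ℝ (f * g) = f * d⁄dX ℝ g + g * d⁄dX ℝ f := by
  simpa [smul_eq_mul] using Derivation.leibniz (d⁄dX ℝ) f g

lemma hpow (v : ℝ⟦X⟧) (k : ℕ) :
    d⁄dX ℝ (v ^ (k+1)) = ((k : ℝ⟦X⟧)+1) * (v ^ k * d⁄dX ℝ v) := by
  rw [Derivation.leibniz_pow]
  simp only [Nat.add_sub_cancel, smul_eq_mul, nsmul_eq_mul]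
  push_cast
  ring

lemma hode : (X * d⁄dX ℝ (U t)) * (1 + C t * (U t + U t ^ 2)) = U t * (1 + U t) := by
  have h2 := hpow (U t) 1
  have h3 := hpow (U t) 2
  push_cast at h2 h3
  have hC2 : C (1/2) * 2 = (1 : ℝ⟦X⟧) := by
    rw [← map_ofNat C 2, ← map_mul]; norm_num
  have hC3 : C (1/3) * 3 = (1 : ℝ⟦X⟧) := by
    rw [← map_ofNat C 3, ← map_mul]; norm_num
  have o := ode1 t
  linear_combination o - (C t * X * C (1/2)) * h2 - (C t * X * C (1/3)) * h3
    - (C t * X * U t * d⁄dX ℝ (U t)) * hC2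
    - (C t * X * U t ^ 2 * d⁄dX ℝ (U t)) * hC3

def Hs (t : ℝ) : ℝ⟦X⟧ := X * W t - U t

lemma key_rel :
    (1 + C t * (U t + U t ^ 2)) * (X * d⁄dX ℝ (Hs t)) = (1 + U t) * Hs t := by
  have hdH : d⁄dX ℝ (Hs t) = W t + X * d⁄dX ℝ (W t) - d⁄dX ℝ (U t) := by
    rw [Hs, map_sub, hmul]
    simp [smul_eq_mul]
    ring
  have hdW : d⁄dX ℝ (W t) = d⁄dX ℝ (U t) * Efn t + (1 + U t) * d⁄dX ℝ (Efn t) := by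
    rw [W, hmul]
    simp [smul_eq_mul]
    ring
  rw [hdH, hdW, hE', Hs, W]
  linear_combination (X * Efn t - C t * X * (1 + U t) * Efn t - 1) * hode t

lemma coeff_X_mul_der (f : ℝ⟦X⟧) (b : ℕ) :
    coeff b (X * d⁄dX ℝ f) = coeff b f * b := by
  rcases b with _ | b
  · simp
  · rw [coeff_succ_X_mul, coeff_derivative]; push_cast; ring

lemma Hzero : Hs t = 0 := by
  ext n
  induction n using Nat.strong_induction_on with
  | _ n ih =>
  simp only [map_zero] at ih ⊢
  rcases n with _ | n
  · rw [Hs, map_sub, coeff_zero_X_mul, coeff_zero_eq_constantCoeff_apply, constantCoeff_U]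
    ring
  rcases n with _ | n
  · rw [Hs, map_sub, coeff_succ_X_mul, coeff_U_one,
      coeff_zero_eq_constantCoeff_apply, hW0]
    ring
  -- n+2 case
  have hk := key_rel t
  have hL : coeff (n+2) ((1 + C t * (U t + U t ^ 2)) * (X * d⁄dX ℝ (Hs t)))
      = coeff (n+2) (Hs t) * (n+2) := by
    rw [coeff_mul]
    rw [Finset.sum_eq_single (0, n+2)]
    · rw [coeff_X_mul_der]
      have : coeff 0 (1 + C t * (U t + U t ^ 2)) = 1 := by
        rw [coeff_zero_eq_constantCoeff_apply]
        rw [map_add, map_one, map_mul, map_add, constantCoeff_C, constantCoeff_U, map_pow,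
          constantCoeff_U]
        ring
      rw [this]
      push_cast; ring
    · rintro ⟨a, b⟩ hp hne
      rw [Finset.HasAntidiagonal.mem_antidiagonal] at hp
      have hb : b < n + 2 := by
        rcases Nat.lt_or_ge b (n+2) with h | h
        · exact h
        · exfalso; apply hne; have : a = 0 := by omega
          subst this; simp_all
      simp only
      rw [coeff_X_mul_der, ih b hb, zero_mul, mul_zero]
    · intro h; exfalso; apply h; simp [Finset.HasAntidiagonal.mem_antidiagonal]
  have hR : coeff (n+2) ((1 + U t) * Hs t) = coeff (n+2) (Hs t) := by
    rw [coeff_mul]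
    rw [Finset.sum_eq_single (0, n+2)]
    · have : coeff 0 (1 + U t) = 1 := by
        rw [coeff_zero_eq_constantCoeff_apply, map_add, map_one, constantCoeff_U]; ring
      rw [this, one_mul]
    · rintro ⟨a, b⟩ hp hne
      rw [Finset.HasAntidiagonal.mem_antidiagonal] at hp
      have hb : b < n + 2 := by
        rcases Nat.lt_or_ge b (n+2) with h | h
        · exact h
        · exfalso; apply hne; have : a = 0 := by omega
          subst this; simp_all
      simp only
      rw [ih b hb, mul_zero]
    · intro h; exfalso; apply h; simp [Finset.HasAntidiagonal.mem_antidiagonal]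
  have := congrArg (coeff (n+2)) hk
  rw [hL, hR] at this
  have hn : ((n:ℝ)+2) ≠ 1 := by
    have : (0:ℝ) ≤ (n:ℝ) := Nat.cast_nonneg n
    intro h; nlinarith
  push_cast at this
  -- this : coeff (n+2) Hs * (n+2) = coeff (n+2) Hs
  nlinarith [this, sq_nonneg (coeff (n+2) (Hs t))]

lemma FE : U t = X * W t := by
  have h := Hzero t
  rw [Hs, sub_eq_zero] at h
  exact h.symm

lemma hWne : constantCoeff (W t) ≠ 0 := by rw [hW0]; norm_num

lemma hWinv : W t * (W t)⁻¹ = 1 := PowerSeries.mul_inv_cancel _ (hWne t)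

lemma hdU : d⁄dX ℝ (U t) = W t + X * d⁄dX ℝ (W t) := by
  conv_lhs => rw [FE t]
  rw [hmul]
  simp
  ring

lemma cc_dU : constantCoeff (d⁄dX ℝ (U t)) = 1 := by
  rw [← coeff_zero_eq_constantCoeff_apply, coeff_derivative, coeff_U_one]
  norm_num

lemma coeffXpow (p : ℝ⟦X⟧) (n d : ℕ) (h : n ≤ d) :
    coeff d (X ^ n * p) = coeff (d - n) p := by
  obtain ⟨e, rfl⟩ : ∃ e, d = e + n := ⟨d - n, by omega⟩
  rw [Nat.add_sub_cancel]
  exact coeff_X_pow_mul p n e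

lemma L4 (k : ℕ) :
    coeff (k+1) (((W t)⁻¹) ^ (k+2) * d⁄dX ℝ (U t)) = 0 := by
  set Wi := (W t)⁻¹ with hWi
  have e1 : Wi ^ (k+2) * d⁄dX ℝ (U t) = Wi ^ (k+1) + X * (Wi ^ (k+2) * d⁄dX ℝ (W t)) := by
    rw [hdU]
    have h0 : Wi ^ (k+2) * W t = Wi ^ (k+1) := by
      rw [pow_succ, mul_assoc, hWi, PowerSeries.inv_mul_cancel _ (hWne t), mul_one]
    calc Wi ^ (k+2) * (W t + X * d⁄dX ℝ (W t))
        = Wi ^ (k+2) * W t + X * (Wi ^ (k+2) * d⁄dX ℝ (W t)) := by ring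
      _ = Wi ^ (k+1) + X * (Wi ^ (k+2) * d⁄dX ℝ (W t)) := by rw [h0]
  have e2 : d⁄dX ℝ (Wi ^ (k+1)) = -(C ((k:ℝ)+1)) * (Wi ^ (k+2) * d⁄dX ℝ (W t)) := by
    rw [hpow Wi k, hWi, PowerSeries.derivative_inv']
    have hcast : ((k:ℝ⟦X⟧)+1) = C ((k:ℝ)+1) := by
      rw [map_add, map_one, map_natCast]
    rw [← hcast]
    ring
  have e3 : coeff k (Wi ^ (k+2) * d⁄dX ℝ (W t))
      = -(coeff (k+1) (Wi ^ (k+1))) := by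
    have h := congrArg (coeff k) e2
    rw [neg_mul, map_neg, PowerSeries.coeff_C_mul, coeff_derivative] at h
    have hne : ((k:ℝ)+1) ≠ 0 := by positivity
    apply mul_left_cancel₀ hne
    rw [mul_neg]
    linarith [h]
  rw [e1, map_add, coeff_succ_X_mul, e3]
  ring

def phi (t : ℝ) : ℝ⟦X⟧ := (1 + X) * eps t

lemma cps_phi : cps (phi t) (U t) = W t := by
  rw [phi, cps_mul (constantCoeff_U t), cps_add, cps_one, cps_X (constantCoeff_U t), W, Efn]

lemma L5 (f : ℝ⟦X⟧) (M : ℕ) :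
    coeff M (cps f (U t) * (((W t)⁻¹) ^ (M+1) * d⁄dX ℝ (U t))) = coeff M f := by
  rw [coeff_cps_mul (constantCoeff_U t)]
  rw [Finset.sum_eq_single M]
  · -- j = M term
    have hUM : (U t) ^ M = X ^ M * W t ^ M := by rw [FE t, mul_pow]
    rw [hUM, mul_assoc, coeffXpow _ M M le_rfl, Nat.sub_self]
    have hone : W t ^ M * ((W t)⁻¹) ^ M = 1 := by rw [← mul_pow, hWinv, one_pow]
    have hcol : W t ^ M * (((W t)⁻¹) ^ (M+1) * d⁄dX ℝ (U t))
        = (W t)⁻¹ * d⁄dX ℝ (U t) := by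
      calc W t ^ M * (((W t)⁻¹) ^ (M+1) * d⁄dX ℝ (U t))
          = (W t ^ M * ((W t)⁻¹) ^ M) * ((W t)⁻¹ * d⁄dX ℝ (U t)) := by ring
        _ = (W t)⁻¹ * d⁄dX ℝ (U t) := by rw [hone, one_mul]
    rw [hcol, coeff_zero_eq_constantCoeff_apply, map_mul, PowerSeries.constantCoeff_inv,
      hW0, cc_dU]
    norm_num
  · -- j ≠ M
    intro j hj hne
    rw [Finset.mem_range] at hj
    have hjM : j < M := by omega
    have hUj : (U t) ^ j = X ^ j * W t ^ j := by rw [FE t, mul_pow]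
    rw [hUj, mul_assoc, coeffXpow _ j M (by omega)]
    have hone : W t ^ j * ((W t)⁻¹) ^ j = 1 := by rw [← mul_pow, hWinv, one_pow]
    have hcol : W t ^ j * (((W t)⁻¹) ^ (M+1) * d⁄dX ℝ (U t))
        = ((W t)⁻¹) ^ (M - j + 1) * d⁄dX ℝ (U t) := by
      have hsplit : ((W t)⁻¹) ^ (M+1) = ((W t)⁻¹) ^ j * ((W t)⁻¹) ^ (M - j + 1) := by
        rw [← pow_add]
        congr 1
        omega
      calc W t ^ j * (((W t)⁻¹) ^ (M+1) * d⁄dX ℝ (U t))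
          = (W t ^ j * ((W t)⁻¹) ^ j) * (((W t)⁻¹) ^ (M - j + 1) * d⁄dX ℝ (U t)) := by
            rw [hsplit]; ring
        _ = ((W t)⁻¹) ^ (M - j + 1) * d⁄dX ℝ (U t) := by rw [hone, one_mul]
    rw [hcol]
    obtain ⟨r, hr⟩ : ∃ r, M - j = r + 1 := ⟨M - j - 1, by omega⟩
    rw [hr, show r + 1 + 1 = r + 2 by omega, L4 t r, mul_zero]
  · intro h; exfalso; apply h; simp

lemma main1 (m : ℕ) :
    coeff m (phi t ^ (m+1)) = ((m:ℝ)+1) * coeff (m+1) (U t) := by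
  have h5 := L5 t (phi t ^ (m+1)) m
  rw [cps_pow (constantCoeff_U t), cps_phi] at h5
  rw [← h5]
  have hone : W t ^ (m+1) * ((W t)⁻¹) ^ (m+1) = 1 := by rw [← mul_pow, hWinv, one_pow]
  have hcol : W t ^ (m+1) * (((W t)⁻¹) ^ (m+1) * d⁄dX ℝ (U t)) = d⁄dX ℝ (U t) := by
    rw [← mul_assoc, hone, one_mul]
  rw [hcol, coeff_derivative]
  ring

lemma main2 (m : ℕ) :
    coeff m (phi t ^ (m+2)) = (((m:ℝ)+2)/2) * coeff (m+2) (U t ^ 2) := by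
  have h5 := L5 t (phi t ^ (m+2)) m
  rw [cps_pow (constantCoeff_U t), cps_phi] at h5
  rw [← h5]
  have hone : W t ^ (m+1) * ((W t)⁻¹) ^ (m+1) = 1 := by rw [← mul_pow, hWinv, one_pow]
  have hcol : W t ^ (m+2) * (((W t)⁻¹) ^ (m+1) * d⁄dX ℝ (U t))
      = W t * d⁄dX ℝ (U t) := by
    calc W t ^ (m+2) * (((W t)⁻¹) ^ (m+1) * d⁄dX ℝ (U t))
        = (W t ^ (m+1) * ((W t)⁻¹) ^ (m+1)) * (W t * d⁄dX ℝ (U t)) := by ring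
      _ = W t * d⁄dX ℝ (U t) := by rw [hone, one_mul]
  rw [hcol]
  have hXmul : coeff m (W t * d⁄dX ℝ (U t))
      = coeff (m+1) (U t * d⁄dX ℝ (U t)) := by
    rw [← coeff_succ_X_mul]
    congr 1
    rw [FE t]
    ring
  have hd2 : d⁄dX ℝ (U t ^ 2) = C 2 * (U t * d⁄dX ℝ (U t)) := by
    have h := hpow (U t) 1
    push_cast at h
    rw [h, pow_one, show C 2 = (2 : ℝ⟦X⟧) by rw [map_ofNat]]
    ring
  have h2 : coeff (m+2) (U t ^ 2) * ((m:ℝ)+1+1) = 2 * coeff (m+1) (U t * d⁄dX ℝ (U t)) := by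
    have := congrArg (coeff (m+1)) hd2
    rw [coeff_derivative, PowerSeries.coeff_C_mul] at this
    push_cast at this
    linarith [this]
  rw [hXmul]
  linarith [h2]

lemma eps_pow (n : ℕ) : (eps t) ^ n = rescale (-((n:ℝ) * t)) (exp ℝ) := by
  induction n with
  | zero =>
    simp [rescale_zero]
  | succ n ih =>
    rw [pow_succ, ih, eps, exp_mul_exp_eq_exp_add]
    congr 1
    push_cast
    ring

lemma coeff_one_add_X_pow (n i : ℕ) : coeff i ((1 + X : ℝ⟦X⟧) ^ n) = (n.choose i : ℝ) := by
  have h : ((1 : ℝ⟦X⟧) + X) = ((Polynomial.X + 1 : Polynomial ℝ) : ℝ⟦X⟧) := by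
    rw [Polynomial.coe_add, Polynomial.coe_X, Polynomial.coe_one]
    ring
  rw [h, ← Polynomial.coe_pow, Polynomial.coeff_coe, Polynomial.coeff_X_add_one_pow]

lemma coeff_phi_pow (n M : ℕ) :
    coeff M (phi t ^ n)
      = ∑ j ∈ range (M+1), (n.choose (M - j) : ℝ) * ((-((n:ℝ) * t))^j / j.factorial) := by
  rw [phi, mul_pow, eps_pow, coeff_mul]
  rw [Finset.Nat.sum_antidiagonal_eq_sum_range_succ
    (fun a b => (coeff a) ((1 + X : ℝ⟦X⟧) ^ n) * (coeff b) ((rescale (-((n:ℝ) * t))) (exp ℝ))) M]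
  rw [← Finset.sum_range_reflect]
  refine Finset.sum_congr rfl ?_
  intro j hj
  rw [Finset.mem_range] at hj
  have h1 : M + 1 - 1 - j = M - j := by omega
  have h2 : M - (M - j) = j := by omega
  simp only [h1, h2]
  rw [coeff_one_add_X_pow, coeff_rescale, PowerSeries.coeff_exp]
  have : (algebraMap ℚ ℝ) (1 / j.factorial) = 1 / (j.factorial : ℝ) := by push_cast; simp
  rw [this]
  ring

def pfun (k : ℕ) (t : ℝ) : ℝ :=
  ∑ j ∈ Finset.range k,
    ((-t) ^ j / (Nat.factorial j : ℝ)) * (Nat.choose k (j + 1) : ℝ) * (k : ℝ) ^ ((j : ℤ) - 1)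

lemma pfun_zero : pfun 0 t = 0 := by simp [pfun]

lemma zpow_helper (x : ℝ) (hx : x ≠ 0) (j : ℕ) : x ^ ((j:ℤ) - 1) = x ^ j / x := by
  rw [zpow_sub₀ hx, zpow_natCast, zpow_one]

lemma clo1 (m : ℕ) : uc t (m+1) = pfun (m+1) t := by
  have h1 := main1 t m
  rw [coeff_phi_pow, coeff_U] at h1
  have hm1 : ((m:ℝ)+1) ≠ 0 := by positivity
  have hterm : ∀ j ∈ range (m+1),
      ((m+1).choose (m - j) : ℝ) * ((-((((m+1:ℕ)):ℝ) * t))^j / j.factorial)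
        = ((m:ℝ)+1) * (((-t) ^ j / (Nat.factorial j : ℝ)) * ((m+1).choose (j + 1) : ℝ)
            * ((m+1:ℕ) : ℝ) ^ ((j : ℤ) - 1)) := by
    intro j hj
    rw [Finset.mem_range] at hj
    have hch : (m+1).choose (m - j) = (m+1).choose (j+1) := by
      rw [← Nat.choose_symm (by omega : j+1 ≤ m+1)]
      congr 1
      omega
    rw [hch, zpow_helper _ (by push_cast; positivity) j]
    have : (-((((m+1:ℕ)):ℝ) * t))^j = ((m+1:ℕ):ℝ)^j * (-t)^j := by
      rw [show (-((((m+1:ℕ)):ℝ) * t)) = ((m+1:ℕ):ℝ) * (-t) by ring, mul_pow]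
    rw [this]
    push_cast
    field_simp
  rw [Finset.sum_congr rfl hterm, ← Finset.mul_sum] at h1
  have h2 := mul_left_cancel₀ hm1 h1
  rw [pfun, ← h2]

lemma uc_eq_pfun (k : ℕ) : uc t k = pfun k t := by
  cases k with
  | zero => rw [uc_zero, pfun_zero]
  | succ m => exact clo1 t m

lemma KL (m : ℕ) :
    ∑ p ∈ Finset.HasAntidiagonal.antidiagonal (m+2), pfun p.1 t * pfun p.2 t
      = 2 * ∑ j ∈ range (m+1),
          ((-t) ^ j / (Nat.factorial j : ℝ)) * ((m+2).choose (j+2) : ℝ)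
            * ((m+2:ℕ) : ℝ) ^ ((j : ℤ) - 1) := by
  have h2 := main2 t m
  rw [coeff_phi_pow, coeff_U2'] at h2
  have hm2 : ((m:ℝ)+2) ≠ 0 := by positivity
  have hterm : ∀ j ∈ range (m+1),
      ((m+2).choose (m - j) : ℝ) * ((-((((m+2:ℕ)):ℝ) * t))^j / j.factorial)
        = ((m:ℝ)+2) * (((-t) ^ j / (Nat.factorial j : ℝ)) * ((m+2).choose (j + 2) : ℝ)
            * ((m+2:ℕ) : ℝ) ^ ((j : ℤ) - 1)) := by
    intro j hj
    rw [Finset.mem_range] at hj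
    have hch : (m+2).choose (m - j) = (m+2).choose (j+2) := by
      rw [← Nat.choose_symm (by omega : j+2 ≤ m+2)]
      congr 1
      omega
    rw [hch, zpow_helper _ (by push_cast; positivity) j]
    have : (-((((m+2:ℕ)):ℝ) * t))^j = ((m+2:ℕ):ℝ)^j * (-t)^j := by
      rw [show (-((((m+2:ℕ)):ℝ) * t)) = ((m+2:ℕ):ℝ) * (-t) by ring, mul_pow]
    rw [this]
    push_cast
    field_simp
  rw [Finset.sum_congr rfl hterm, ← Finset.mul_sum] at h2
  have hP : ∑ p ∈ Finset.HasAntidiagonal.antidiagonal (m+2), uc t p.1 * uc t p.2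
      = ∑ p ∈ Finset.HasAntidiagonal.antidiagonal (m+2), pfun p.1 t * pfun p.2 t := by
    refine Finset.sum_congr rfl fun p _ => ?_
    rw [uc_eq_pfun, uc_eq_pfun]
  rw [hP] at h2
  -- h2 : (m+2) * S = ((m+2)/2) * P ; goal : P = 2 * S
  apply mul_left_cancel₀ hm2
  rw [show ((m:ℝ)+2) * (2 * ∑ j ∈ range (m+1),
          ((-t) ^ j / (Nat.factorial j : ℝ)) * ((m+2).choose (j+2) : ℝ)
            * ((m+2:ℕ) : ℝ) ^ ((j : ℤ) - 1)) = 2 * (((m:ℝ)+2) * ∑ j ∈ range (m+1),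
          ((-t) ^ j / (Nat.factorial j : ℝ)) * ((m+2).choose (j+2) : ℝ)
            * ((m+2:ℕ) : ℝ) ^ ((j : ℤ) - 1)) by ring, h2]
  ring

lemma fub_eq (k : ℕ) (x : ℝ) : fubMoment k x = Real.exp (-(k : ℝ) * x / 2) * pfun k x := rfl

lemma pfun_zero' (t : ℝ) : pfun 0 t = 0 := by simp [pfun]

lemma pfun_at_zero (m : ℕ) : pfun (m+1) 0 = 1 := by
  rw [pfun, Finset.sum_eq_single 0]
  · have h : ((m:ℝ) + 1) ≠ 0 := by positivity
    simp [h, mul_inv_cancel₀]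
  · intro j _ hj
    rw [neg_zero, zero_pow hj]
    ring
  · intro h; simp at h

-- the weighted/unweighted antidiagonal symmetry
lemma sum_antidiag_weight (n : ℕ) (t : ℝ) :
    2 * ∑ p ∈ Finset.HasAntidiagonal.antidiagonal n, (p.2 : ℝ) * (pfun p.1 t * pfun p.2 t)
      = (n : ℝ) * ∑ p ∈ Finset.HasAntidiagonal.antidiagonal n, pfun p.1 t * pfun p.2 t := by
  have hswap : ∑ p ∈ Finset.HasAntidiagonal.antidiagonal n, (p.2 : ℝ) * (pfun p.1 t * pfun p.2 t)
      = ∑ p ∈ Finset.HasAntidiagonal.antidiagonal n, (p.1 : ℝ) * (pfun p.1 t * pfun p.2 t) := by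
    refine Finset.sum_nbij' (fun p => (p.2, p.1)) (fun p => (p.2, p.1)) ?_ ?_ ?_ ?_ ?_
    · rintro ⟨a,b⟩ hp; simp only [Finset.HasAntidiagonal.mem_antidiagonal] at *; omega
    · rintro ⟨a,b⟩ hp; simp only [Finset.HasAntidiagonal.mem_antidiagonal] at *; omega
    · rintro ⟨a,b⟩ _; rfl
    · rintro ⟨a,b⟩ _; rfl
    · rintro ⟨a,b⟩ _; simp only; ring
  calc 2 * ∑ p ∈ Finset.HasAntidiagonal.antidiagonal n, (p.2 : ℝ) * (pfun p.1 t * pfun p.2 t)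
      = ∑ p ∈ Finset.HasAntidiagonal.antidiagonal n, ((p.1:ℝ) + (p.2:ℝ)) * (pfun p.1 t * pfun p.2 t) := by
        rw [two_mul]
        nth_rewrite 1 [hswap]
        rw [← Finset.sum_add_distrib]
        exact Finset.sum_congr rfl fun p _ => by ring
    _ = (n : ℝ) * ∑ p ∈ Finset.HasAntidiagonal.antidiagonal n, pfun p.1 t * pfun p.2 t := by
        rw [Finset.mul_sum]
        refine Finset.sum_congr rfl ?_
        rintro ⟨a,b⟩ hp
        rw [Finset.HasAntidiagonal.mem_antidiagonal] at hp
        have : ((a:ℝ) + (b:ℝ)) = (n:ℝ) := by exact_mod_cast congrArg (Nat.cast (R := ℝ)) hp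
        simp only
        rw [this]

def Dsum (m : ℕ) (t : ℝ) : ℝ :=
  ∑ j ∈ range (m+1), (((j:ℝ) * (-(2*t))^(j-1) * (-2)) / (j.factorial:ℝ))
    * (((m+1).choose (j+1) : ℝ)) * (((m+1:ℕ):ℝ))^((j:ℤ)-1)

lemma hasDeriv_herg (m : ℕ) (t : ℝ) :
    HasDerivAt (fun s => herglotzCoeff (m+1) s)
      (2 * ((Real.exp (-((m+1:ℕ):ℝ) * (2*t) / 2) * (-((m+1:ℕ):ℝ))) * pfun (m+1) (2*t)
        + Real.exp (-((m+1:ℕ):ℝ) * (2*t) / 2) * Dsum m t)) t := by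
  have hfeq : (fun s => herglotzCoeff (m+1) s)
      = (fun s => 2 * (Real.exp (-((m+1:ℕ):ℝ) * (2*s) / 2) * pfun (m+1) (2*s))) := by
    funext s
    rw [herglotzCoeff, if_neg (Nat.succ_ne_zero m), fub_eq]
  rw [hfeq]
  have hinner : HasDerivAt (fun s : ℝ => -((m+1:ℕ):ℝ) * (2*s) / 2) (-((m+1:ℕ):ℝ)) t := by
    have h1 : HasDerivAt (fun s : ℝ => s) 1 t := hasDerivAt_id t
    have h2 := ((h1.const_mul (2:ℝ)).const_mul (-((m+1:ℕ):ℝ))).div_const 2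
    have : -((m+1:ℕ):ℝ) * (2 * 1) / 2 = -((m+1:ℕ):ℝ) := by ring
    rw [this] at h2
    exact h2
  have hexp := hinner.exp
  have hbase : HasDerivAt (fun s : ℝ => -(2*s)) (-2) t := by
    have h1 := ((hasDerivAt_id t).const_mul (2:ℝ)).neg
    have : -(2 * 1) = (-2 : ℝ) := by ring
    rw [this] at h1
    exact h1
  have hG : HasDerivAt (fun s => pfun (m+1) (2*s)) (Dsum m t) t := by
    have : (fun s : ℝ => pfun (m+1) (2*s))
        = fun s => ∑ j ∈ range (m+1),
            ((-(2*s)) ^ j / (Nat.factorial j : ℝ)) * (Nat.choose (m+1) (j + 1) : ℝ)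
              * (((m+1:ℕ)) : ℝ) ^ ((j : ℤ) - 1) := by
      funext s; rw [pfun]
    rw [this, Dsum]
    refine HasDerivAt.fun_sum ?_
    intro j _
    exact (((hbase.pow j).div_const _).mul_const _).mul_const _
  exact (hexp.mul hG).const_mul 2

lemma Dsum_eq (m : ℕ) (t : ℝ) :
    Dsum m t = -2 * ∑ i ∈ range m,
      ((-(2*t))^i / (i.factorial:ℝ)) * (((m+1).choose (i+2) : ℝ)) * (((m+1:ℕ):ℝ))^(i:ℤ) := by
  rw [Dsum, Finset.sum_range_succ']
  have h0 : (((0:ℕ):ℝ) * (-(2*t))^(0-1) * (-2)) / ((Nat.factorial 0 :ℕ):ℝ)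
      * (((m+1).choose (0+1) : ℝ)) * (((m+1:ℕ):ℝ))^(((0:ℕ):ℤ)-1) = 0 := by
    norm_num
  rw [h0, add_zero, Finset.mul_sum]
  refine Finset.sum_congr rfl ?_
  intro i _
  have hfac : ((i+1).factorial : ℝ) = (i.factorial : ℝ) * ((i:ℝ)+1) := by
    rw [Nat.factorial_succ]; push_cast; ring
  have hz : (((m+1:ℕ):ℝ))^(((i+1:ℕ):ℤ)-1) = (((m+1:ℕ):ℝ))^(i:ℤ) := by
    congr 1
    push_cast
    ring
  rw [hz]
  have hifne : (i.factorial : ℝ) ≠ 0 := by positivity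
  have hi1 : ((i:ℝ)+1) ≠ 0 := by positivity
  have hjj : (((i+1:ℕ):ℝ) * (-(2*t))^(i+1-1) * (-2)) / ((i+1).factorial:ℝ)
      = -2 * ((-(2*t))^i / (i.factorial:ℝ)) := by
    rw [hfac, Nat.add_sub_cancel]
    push_cast
    field_simp
  rw [hjj]
  ring

lemma D_plus_2T (m : ℕ) (t : ℝ) :
    Dsum m t + 2 * ∑ p ∈ Finset.HasAntidiagonal.antidiagonal (m+1),
        (p.2 : ℝ) * (pfun p.1 (2*t) * pfun p.2 (2*t)) = 0 := by
  have hsym := sum_antidiag_weight (m+1) (2*t)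
  rcases m with _ | k
  · -- n = 1
    have hD : Dsum 0 t = 0 := by rw [Dsum_eq]; simp
    have hT : ∑ p ∈ Finset.HasAntidiagonal.antidiagonal (0+1 : ℕ), ((p.2 : ℝ) * (pfun p.1 (2*t) * pfun p.2 (2*t))) = 0 := by
      simp [Finset.Nat.antidiagonal_succ, pfun_zero']
    rw [hD, hT]; ring
  · -- n = k+2
    have hkl := KL (2*t) k
    have hD : Dsum (k+1) t = -2 * (((k+2:ℕ):ℝ) *
        ∑ j ∈ range (k+1), ((-(2*t)) ^ j / (Nat.factorial j : ℝ)) * ((k+2).choose (j+2) : ℝ)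
          * ((k+2:ℕ) : ℝ) ^ ((j : ℤ) - 1)) := by
      rw [Dsum_eq, show k+1+1 = k+2 from rfl]
      have hsum : (∑ i ∈ range (k+1),
            ((-(2*t))^i / (i.factorial:ℝ)) * (((k+2).choose (i+2) : ℝ)) * (((k+2:ℕ):ℝ))^(i:ℤ))
          = ((k+2:ℕ):ℝ) * ∑ j ∈ range (k+1),
            ((-(2*t)) ^ j / (Nat.factorial j : ℝ)) * ((k+2).choose (j+2) : ℝ)
              * ((k+2:ℕ) : ℝ) ^ ((j : ℤ) - 1) := by
        rw [Finset.mul_sum]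
        refine Finset.sum_congr rfl fun i _ => ?_
        have hx : ((k+2:ℕ):ℝ) ≠ 0 := by positivity
        have hzz : ((k+2:ℕ):ℝ) ^ ((i:ℤ)) = ((k+2:ℕ):ℝ) ^ ((i:ℤ)-1) * ((k+2:ℕ):ℝ) := by
          rw [show (i:ℤ) = ((i:ℤ)-1)+1 by ring, zpow_add_one₀ hx]
          ring_nf
        rw [hzz]
        ring
      rw [hsum]
    rw [show k+1+1 = k+2 from rfl] at hsym ⊢
    linear_combination hD + hsym + ((k+2:ℕ):ℝ) * hkl

lemma part1 (n : ℕ) : herglotzCoeff n 0 = if n = 0 then 1 else 2 := by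
  cases n with
  | zero => simp [herglotzCoeff]
  | succ m =>
    rw [herglotzCoeff, if_neg (Nat.succ_ne_zero m), if_neg (Nat.succ_ne_zero m)]
    rw [show (2:ℝ) * 0 = 0 by ring, fub_eq, pfun_at_zero]
    norm_num

lemma part2 (n : ℕ) (t : ℝ) :
    deriv (fun s => herglotzCoeff n s) t
      + ∑ p ∈ Finset.HasAntidiagonal.antidiagonal n,
          (p.2 : ℝ) * herglotzCoeff p.1 t * herglotzCoeff p.2 t = 0 := by
  cases n with
  | zero =>
    have h1 : (fun s => herglotzCoeff 0 s) = fun _ => (1:ℝ) := by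
      funext s; simp [herglotzCoeff]
    rw [h1, deriv_const]
    simp [herglotzCoeff]
  | succ m =>
    have hd := (hasDeriv_herg m t).deriv
    have hterm : ∀ p ∈ Finset.HasAntidiagonal.antidiagonal (m+1),
        (p.2 : ℝ) * herglotzCoeff p.1 t * herglotzCoeff p.2 t
          = Real.exp (-((m+1:ℕ):ℝ) * (2*t) / 2) * 4
              * ((p.2:ℝ) * (pfun p.1 (2*t) * pfun p.2 (2*t)))
            + (if p = ((0:ℕ), m+1) then
                Real.exp (-((m+1:ℕ):ℝ) * (2*t) / 2)
                  * (2 * ((m+1:ℕ):ℝ) * pfun (m+1) (2*t)) else 0) := by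
      rintro ⟨a, b⟩ hp
      rw [Finset.HasAntidiagonal.mem_antidiagonal] at hp
      simp only at hp ⊢
      rcases Nat.eq_zero_or_pos a with ha | ha
      · subst ha
        have hb : b = m + 1 := by omega
        subst hb
        rw [if_pos rfl, pfun_zero']
        rw [herglotzCoeff, if_pos rfl, herglotzCoeff, if_neg (Nat.succ_ne_zero m), fub_eq]
        push_cast
        ring
      rcases Nat.eq_zero_or_pos b with hb | hb
      · subst hb
        have hne : ((a:ℕ), (0:ℕ)) ≠ ((0:ℕ), m+1) := by
          intro h; injection h with h1 h2; omega
        rw [if_neg hne, pfun_zero']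
        push_cast
        ring
      · have hne : ((a:ℕ), (b:ℕ)) ≠ ((0:ℕ), m+1) := by
          intro h; injection h with h1 h2; omega
        rw [if_neg hne]
        rw [herglotzCoeff, if_neg (by omega), herglotzCoeff, if_neg (by omega), fub_eq, fub_eq]
        have hee : Real.exp (-(a:ℝ) * (2*t) / 2) * Real.exp (-(b:ℝ) * (2*t) / 2)
            = Real.exp (-((m+1:ℕ):ℝ) * (2*t) / 2) := by
          rw [← Real.exp_add]
          congr 1
          have : (a:ℝ) + (b:ℝ) = ((m+1:ℕ):ℝ) := by exact_mod_cast congrArg (Nat.cast (R := ℝ)) hp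
          linear_combination (-(2*t)/2) * this
        calc (b:ℝ) * (2 * (Real.exp (-(a:ℝ) * (2*t) / 2) * pfun a (2*t)))
              * (2 * (Real.exp (-(b:ℝ) * (2*t) / 2) * pfun b (2*t)))
            = (Real.exp (-(a:ℝ) * (2*t) / 2) * Real.exp (-(b:ℝ) * (2*t) / 2)) * 4
                * ((b:ℝ) * (pfun a (2*t) * pfun b (2*t))) := by ring
          _ = Real.exp (-((m+1:ℕ):ℝ) * (2*t) / 2) * 4
                * ((b:ℝ) * (pfun a (2*t) * pfun b (2*t))) := by rw [hee]
          _ = Real.exp (-((m+1:ℕ):ℝ) * (2*t) / 2) * 4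
                * ((b:ℝ) * (pfun a (2*t) * pfun b (2*t))) + 0 := by ring
    have hS : ∑ p ∈ Finset.HasAntidiagonal.antidiagonal (m+1),
        (p.2 : ℝ) * herglotzCoeff p.1 t * herglotzCoeff p.2 t
          = Real.exp (-((m+1:ℕ):ℝ) * (2*t) / 2) * 4
              * (∑ p ∈ Finset.HasAntidiagonal.antidiagonal (m+1), (p.2:ℝ) * (pfun p.1 (2*t) * pfun p.2 (2*t)))
            + Real.exp (-((m+1:ℕ):ℝ) * (2*t) / 2) * (2 * ((m+1:ℕ):ℝ) * pfun (m+1) (2*t)) := by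
      rw [Finset.sum_congr rfl hterm, Finset.sum_add_distrib, ← Finset.mul_sum,
        Finset.sum_ite_eq' (Finset.HasAntidiagonal.antidiagonal (m+1)) ((0:ℕ), m+1)]
      rw [if_pos (by simp)]
    rw [hd, hS]
    linear_combination (2 * Real.exp (-((m+1:ℕ):ℝ) * (2*t) / 2)) * D_plus_2T m t

end
end Stmt13

/-- `H(t,z) = 1 + 2∑ m_k(2t) z^k` is a formal power series solution of
`∂ₜH + zH∂_zH = 0` with `H(0,z) = (1+z)/(1-z)`, i.e. coefficient-wise:
the coefficient of `z^n` in `zH∂_zH` is `∑_{i+j=n} j c_i c_j`, and the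
initial coefficients are those of `(1+z)/(1-z)`. -/
theorem stmt13 :
    (∀ n : ℕ, herglotzCoeff n 0 = if n = 0 then 1 else 2) ∧
    (∀ (n : ℕ) (t : ℝ), 0 ≤ t →
      deriv (fun s => herglotzCoeff n s) t
        + ∑ p ∈ Finset.HasAntidiagonal.antidiagonal n,
            (p.2 : ℝ) * herglotzCoeff p.1 t * herglotzCoeff p.2 t = 0) := by
  exact ⟨Stmt13.part1, fun n t _ => Stmt13.part2 n t⟩
end
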